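/- Let L be positive semi-definite and block tridiagonal with respect to Y_1, ..., Y_m, and let Ĉ_1, ..., Ĉ_m be the output of the sequential procedure that at step i exactly maximizes det(L̃_{C_i}) over C_i ⊆ Y_i given the previously fixed Ĉ_1, ..., Ĉ_{i-1} (with L̃ defined by the Schur-complement recursion). Then det(L_{Ĉ_1 ∪ ... ∪ Ĉ_m}) = ∏_{i=1}^m max_{C_i ⊆ Y_i} det((L̃_{Y_i})_{C_i}), where L̃_{Y_1} = L_{Y_1} and L̃_{Y_i} = L_{Y_i} − (L_{Ĉ_{i-1},Y_i})^T (L̃_{Ĉ_{i-1}})^{-1} L_{Ĉ_{i-1},Y_i}. -/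

import Mathlib

/-!
Write `A_k = Ĉ_0 ∪ ⋯ ∪ Ĉ_{k-1}`. By the Schur determinant formula,
`det L_{A_{k+1}} = det L_{A_k} · det S_k` with `S_k = L_{Ĉ_k} - L_{Ĉ_k,A_k} L_{A_k}⁻¹ L_{A_k,Ĉ_k}`,
and the `(Ĉ_k, Ĉ_k)` block of `L_{A_{k+1}}⁻¹` is `S_k⁻¹`. Block tridiagonality means `Ĉ_{k+1}`
only couples to the `Ĉ_k` part of `A_{k+1}`, so `S_{k+1}` only sees that block of the inverse, and
an induction gives `S_k = (L̃_{Y_k})_{Ĉ_k}`. Hence `det L_{A_m} = ∏ det (L̃_{Y_k})_{Ĉ_k}`, and each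
factor is the maximum by the choice of `Ĉ_k`.
-/

open Matrix

/-- Principal/rectangular submatrix of `L` with rows indexed by `A` and columns by `B`. -/
def subm {N : ℕ} (L : Matrix (Fin N) (Fin N) ℝ) (A B : Finset (Fin N)) :
    Matrix A B ℝ := Matrix.of fun i j => L i.1 j.1

/-- Principal submatrix of a matrix indexed by `A`, restricted to `B ⊆ A`. -/
def subm2 {N : ℕ} {A B : Finset (Fin N)} (M : Matrix A A ℝ) (h : B ⊆ A) :
    Matrix B B ℝ := Matrix.of fun i j => M ⟨i.1, h i.2⟩ ⟨j.1, h j.2⟩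

open Finset

namespace Matrix

variable {ι κ m n R : Type*} [Fintype ι] [Fintype κ] [NonUnitalNonAssocSemiring R]

theorem mul_mul_eq_submatrix_of_eq_zero (e : κ → ι) (he : Function.Injective e)
    (P : Matrix m ι R) (M : Matrix ι ι R) (Q : Matrix ι n R)
    (hP : ∀ i, ∀ j ∉ Set.range e, P i j = 0) (hQ : ∀ j ∉ Set.range e, ∀ k, Q j k = 0) :
    P * M * Q = P.submatrix id e * M.submatrix e e * Q.submatrix e id := by
  have hPM : ∀ i j, (P * M) i j = ∑ l, P i (e l) * M (e l) j := fun i j =>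
    (Fintype.sum_of_injective e he _ (fun l => P i l * M l j)
      (fun l hl => by rw [hP i l hl, zero_mul]) fun _ => rfl).symm
  ext i k
  refine (Fintype.sum_of_injective e he _ (fun j => (P * M) i j * Q j k)
    (fun j hj => by rw [hQ j hj k, mul_zero]) fun l => ?_).symm
  rw [hPM]
  rfl

end Matrix

section SchurComplement

variable {N : ℕ} (L : Matrix (Fin N) (Fin N) ℝ) {s t : Finset (Fin N)}

noncomputable def schurCompl (s t : Finset (Fin N)) : Matrix t t ℝ :=
  subm L t t - subm L t s * (subm L s s)⁻¹ * subm L s t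

theorem submatrix_subm_union_eq_fromBlocks (hd : Disjoint s t) :
    (subm L (s ∪ t) (s ∪ t)).submatrix (Equiv.Finset.union s t hd) (Equiv.Finset.union s t hd)
      = fromBlocks (subm L s s) (subm L s t) (subm L t s) (subm L t t) := by
  ext (i | i) (j | j) <;> rfl

theorem det_subm_union (hd : Disjoint s t) (hs : IsUnit (subm L s s).det) :
    (subm L (s ∪ t) (s ∪ t)).det = (subm L s s).det * (schurCompl L s t).det := by
  let := invertibleOfIsUnitDet _ hs
  rw [← det_submatrix_equiv_self (Equiv.Finset.union s t hd),
    submatrix_subm_union_eq_fromBlocks L hd, det_fromBlocks₁₁, invOf_eq_nonsing_inv, schurCompl]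

theorem subm2_inv_subm_union (hd : Disjoint s t) (hs : IsUnit (subm L s s).det)
    (hS : IsUnit (schurCompl L s t).det) :
    subm2 (subm L (s ∪ t) (s ∪ t))⁻¹ subset_union_right = (schurCompl L s t)⁻¹ := by
  let := invertibleOfIsUnitDet _ hs
  have hschur : subm L t t - subm L t s * ⅟(subm L s s) * subm L s t = schurCompl L s t := by
    rw [invOf_eq_nonsing_inv, schurCompl]
  let : Invertible (subm L t t - subm L t s * ⅟(subm L s s) * subm L s t) :=
    (invertibleOfIsUnitDet _ hS).copy _ hschur
  let := fromBlocks₁₁Invertible (subm L s s) (subm L s t) (subm L t s) (subm L t t)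
  ext x y
  have h := congrFun (congrFun (inv_submatrix_equiv (subm L (s ∪ t) (s ∪ t))
    (Equiv.Finset.union s t hd) (Equiv.Finset.union s t hd)) (Sum.inr x)) (Sum.inr y)
  rw [submatrix_subm_union_eq_fromBlocks L hd, ← invOf_eq_nonsing_inv, invOf_fromBlocks₁₁_eq,
    fromBlocks_apply₂₂, invOf_eq_nonsing_inv, hschur] at h
  exact h.symm

theorem schurCompl_empty (t : Finset (Fin N)) : schurCompl L ∅ t = subm L t t := by
  ext x y
  simp [schurCompl, mul_apply]

theorem schurCompl_eq_of_eq_zero {b : Finset (Fin N)} (hb : b ⊆ s)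
    (hL : ∀ x ∈ s, x ∉ b → ∀ y ∈ t, L y x = 0 ∧ L x y = 0) :
    schurCompl L s t = subm L t t - subm L t b * subm2 (subm L s s)⁻¹ hb * subm L b t := by
  let e := Subtype.impEmbedding (· ∈ b) (· ∈ s) hb
  have hrange : ∀ x : s, x ∉ Set.range e → x.1 ∉ b := fun x hx hxb => hx ⟨⟨x.1, hxb⟩, rfl⟩
  rw [schurCompl, mul_mul_eq_submatrix_of_eq_zero e e.injective _ _ _
    (fun y x hx => (hL x.1 x.2 (hrange x hx) y.1 y.2).1)
    (fun x hx y => (hL x.1 x.2 (hrange x hx) y.1 y.2).2)]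
  rfl

theorem schurCompl_union_eq {c : Finset (Fin N)} (hd : Disjoint s c)
    (hs : IsUnit (subm L s s).det) (hS : IsUnit (schurCompl L s c).det)
    (hL : ∀ x ∈ s, ∀ y ∈ t, L y x = 0 ∧ L x y = 0) :
    schurCompl L (s ∪ c) t = subm L t t - subm L t c * (schurCompl L s c)⁻¹ * subm L c t := by
  rw [schurCompl_eq_of_eq_zero L subset_union_right
    (fun x hx hxc => hL x ((mem_union.mp hx).resolve_right hxc)), subm2_inv_subm_union L hd hs hS]

theorem subm2_sub_transpose_mul_mul (hL : L.IsSymm) {Y C c : Finset (Fin N)}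
    (M : Matrix c c ℝ) (h : C ⊆ Y) :
    subm2 (subm L Y Y - (subm L c Y)ᵀ * M * subm L c Y) h
      = subm L C C - subm L C c * M * subm L c C := by
  ext i j
  simp [subm2, subm, mul_apply, hL.apply]

end SchurComplement

theorem sup'_det_subm2_eq_of_le {N : ℕ} {Y C : Finset (Fin N)} {M : Matrix Y Y ℝ} {hC : C ⊆ Y}
    (hmax : ∀ S : Finset (Fin N), ∀ hS : S ⊆ Y, (subm2 M hS).det ≤ (subm2 M hC).det) :
    Y.powerset.attach.sup' (attach_nonempty_iff.mpr Y.powerset_nonempty)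
      (fun S => (subm2 M (mem_powerset.mp S.2)).det) = (subm2 M hC).det :=
  le_antisymm (sup'_le _ _ fun S _ => hmax S.1 _)
    (le_sup' (fun S : Y.powerset => (subm2 M (mem_powerset.mp S.2)).det)
      (mem_attach _ ⟨C, mem_powerset.mpr hC⟩))

theorem det_subm_biUnion_eq_prod_and_schurCompl_eq {N m : ℕ} (L : Matrix (Fin N) (Fin N) ℝ)
    (hL : L.IsSymm) (Y : ℕ → Finset (Fin N))
    (hdisj : ∀ i < m, ∀ j < m, i ≠ j → Disjoint (Y i) (Y j))
    (htri : ∀ i < m, ∀ j < m, i + 2 ≤ j →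
      ∀ a ∈ Y i, ∀ b ∈ Y j, L a b = 0 ∧ L b a = 0)
    (Ci : ℕ → Finset (Fin N)) (hCi : ∀ i, Ci i ⊆ Y i)
    (Lt : (i : ℕ) → Matrix (Y i) (Y i) ℝ)
    (hLt0 : Lt 0 = subm L (Y 0) (Y 0))
    (hLtS : ∀ i, 0 < i → i < m →
      Lt i = subm L (Y i) (Y i)
        - (subm L (Ci (i - 1)) (Y i))ᵀ * (subm2 (Lt (i - 1)) (hCi (i - 1)))⁻¹
            * subm L (Ci (i - 1)) (Y i))
    (hinv : ∀ i < m, IsUnit (subm2 (Lt i) (hCi i)).det) :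
    ∀ k ≤ m,
      (subm L ((range k).biUnion Ci) ((range k).biUnion Ci)).det
          = ∏ i ∈ range k, (subm2 (Lt i) (hCi i)).det ∧
        (k < m → schurCompl L ((range k).biUnion Ci) (Ci k) = subm2 (Lt k) (hCi k)) := by
  intro k
  induction k with
  | zero =>
    intro _
    rw [range_zero, biUnion_empty, prod_empty, schurCompl_empty, hLt0]
    exact ⟨det_isEmpty, fun _ => rfl⟩
  | succ k ih =>
    intro hk
    obtain ⟨hdet, hschur⟩ := ih (by omega)
    have hkm : k < m := by omega
    have hunion : (range (k + 1)).biUnion Ci = (range k).biUnion Ci ∪ Ci k := by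
      rw [range_add_one, biUnion_insert, union_comm]
    have hd : Disjoint ((range k).biUnion Ci) (Ci k) := by
      refine (disjoint_biUnion_left _ _ _).mpr fun j hj => ?_
      have hjk := mem_range.mp hj
      exact (hdisj j (by omega) k hkm (by omega)).mono (hCi j) (hCi k)
    have hs : IsUnit (subm L ((range k).biUnion Ci) ((range k).biUnion Ci)).det := by
      rw [hdet]
      exact IsUnit.prod_iff.mpr fun i hi => hinv i (by have := mem_range.mp hi; omega)
    have hS : IsUnit (schurCompl L ((range k).biUnion Ci) (Ci k)).det := by
      rw [hschur hkm]
      exact hinv k hkm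
    rw [hunion]
    refine ⟨by rw [det_subm_union L hd hs, hdet, hschur hkm, prod_range_succ], fun hk1 => ?_⟩
    have hfar : ∀ x ∈ (range k).biUnion Ci, ∀ y ∈ Ci (k + 1), L y x = 0 ∧ L x y = 0 := by
      intro x hx y hy
      obtain ⟨j, hj, hxj⟩ := mem_biUnion.mp hx
      have hjk := mem_range.mp hj
      exact (htri j (by omega) (k + 1) hk1 (by omega) x (hCi j hxj) y (hCi _ hy)).symm
    rw [schurCompl_union_eq L hd hs hS hfar, hschur hkm, hLtS (k + 1) k.succ_pos hk1]
    exact (subm2_sub_transpose_mul_mul L hL _ _).symm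

theorem stmt15_general {N m : ℕ} (L : Matrix (Fin N) (Fin N) ℝ) (hL : L.PosSemidef)
    (Y : ℕ → Finset (Fin N))
    (hdisj : ∀ i < m, ∀ j < m, i ≠ j → Disjoint (Y i) (Y j))
    (htri : ∀ i < m, ∀ j < m, i + 2 ≤ j →
      ∀ a ∈ Y i, ∀ b ∈ Y j, L a b = 0 ∧ L b a = 0)
    (Ci : ℕ → Finset (Fin N)) (hCi : ∀ i, Ci i ⊆ Y i)
    (Lt : (i : ℕ) → Matrix (Y i) (Y i) ℝ)
    (hLt0 : Lt 0 = subm L (Y 0) (Y 0))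
    (hLtS : ∀ i, 0 < i → i < m →
      Lt i = subm L (Y i) (Y i)
        - (subm L (Ci (i - 1)) (Y i))ᵀ * (subm2 (Lt (i - 1)) (hCi (i - 1)))⁻¹
            * subm L (Ci (i - 1)) (Y i))
    (hinv : ∀ i < m, IsUnit (subm2 (Lt i) (hCi i)).det)
    (hmax : ∀ i < m, ∀ S : Finset (Fin N), ∀ hS : S ⊆ Y i,
      (subm2 (Lt i) hS).det ≤ (subm2 (Lt i) (hCi i)).det) :
    (subm L ((Finset.range m).biUnion Ci) ((Finset.range m).biUnion Ci)).det
      = ∏ i ∈ Finset.range m,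
          ((Y i).powerset.attach.sup'
            (Finset.attach_nonempty_iff.mpr ((Y i).powerset_nonempty))
            (fun S => (subm2 (Lt i) (Finset.mem_powerset.mp S.2)).det)) := by
  rw [(det_subm_biUnion_eq_prod_and_schurCompl_eq L (isHermitian_iff_isSymm.mp hL.isHermitian)
    Y hdisj htri Ci hCi Lt hLt0 hLtS hinv m le_rfl).1]
  exact prod_congr rfl fun i hi =>
    (sup'_det_subm2_eq_of_le (hmax i (mem_range.mp hi))).symm

/-- If `Ĉ_1,…,Ĉ_m` are obtained by exactly maximizing `det(L̃_{C_i})` over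
`C_i ⊆ Y_i` at each step of the BwDPP-MAP Schur-complement recursion, then
`det(L_{Ĉ_1 ∪ ⋯ ∪ Ĉ_m}) = ∏ᵢ max_{C_i ⊆ Y_i} det((L̃_{Y_i})_{C_i})`. -/
theorem stmt15 {N m : ℕ} (L : Matrix (Fin N) (Fin N) ℝ) (hL : L.PosSemidef)
    (Y : ℕ → Finset (Fin N))
    (hdisj : ∀ i < m, ∀ j < m, i ≠ j → Disjoint (Y i) (Y j))
    (hcover : (Finset.range m).biUnion Y = Finset.univ)
    (htri : ∀ i < m, ∀ j < m, i + 2 ≤ j →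
      ∀ a ∈ Y i, ∀ b ∈ Y j, L a b = 0 ∧ L b a = 0)
    (Ci : ℕ → Finset (Fin N)) (hCi : ∀ i, Ci i ⊆ Y i)
    (Lt : (i : ℕ) → Matrix (Y i) (Y i) ℝ)
    (hLt0 : Lt 0 = subm L (Y 0) (Y 0))
    (hLtS : ∀ i, 0 < i → i < m →
      Lt i = subm L (Y i) (Y i)
        - (subm L (Ci (i - 1)) (Y i))ᵀ * (subm2 (Lt (i - 1)) (hCi (i - 1)))⁻¹
            * subm L (Ci (i - 1)) (Y i))
    (hinv : ∀ i < m, IsUnit (subm2 (Lt i) (hCi i)).det)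
    (hmax : ∀ i < m, ∀ S : Finset (Fin N), ∀ hS : S ⊆ Y i,
      (subm2 (Lt i) hS).det ≤ (subm2 (Lt i) (hCi i)).det) :
    (subm L ((Finset.range m).biUnion Ci) ((Finset.range m).biUnion Ci)).det
      = ∏ i ∈ Finset.range m,
          ((Y i).powerset.attach.sup'
            (Finset.attach_nonempty_iff.mpr ((Y i).powerset_nonempty))
            (fun S => (subm2 (Lt i) (Finset.mem_powerset.mp S.2)).det)) :=
  stmt15_general L hL Y hdisj htri Ci hCi Lt hLt0 hLtS hinv hmax
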